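/- arXiv:2105.01459 — 6 statements merged into one kernel-verified Lean document; each statement's English description precedes it below -/
import Mathlib

section
/- Let X be a random variable on a finite universe, and suppose X is ε-close in statistical distance to a random variable X' with min-entropy at least k. Then with probability at least 1−2ε over x sampled from X, the sample entropy H_X(x) is at least k−log(1/ε). -/
open Finset
open scoped Classical

/-- If X is ε-close to some X' with min-entropy at least k, then with probability at least
1−2ε over x ← X the sample entropy is at least k − log₂(1/ε). -/
theorem stmt1 {α : Type*} [Fintype α]
    (p q : α → ℝ) (hp0 : ∀ x, 0 ≤ p x) (hp1 : ∑ x, p x = 1)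
    (hq0 : ∀ x, 0 ≤ q x) (hq1 : ∑ x, q x = 1)
    (ε k : ℝ) (hε : 0 < ε)
    (hclose : ∀ T : Finset α, |∑ x ∈ T, p x - ∑ x ∈ T, q x| ≤ ε)
    (hmin : ∀ x, q x ≠ 0 → k ≤ Real.logb 2 (1 / q x)) :
    1 - 2 * ε ≤
      ∑ x ∈ univ.filter (fun x => k - Real.logb 2 (1 / ε) ≤ Real.logb 2 (1 / p x)), p x := by
  set good : α → Prop := fun x => k - Real.logb 2 (1 / ε) ≤ Real.logb 2 (1 / p x) with hgood
  set B : Finset α := univ.filter (fun x => ¬ good x) with hBdef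
  set B' : Finset α := univ.filter (fun x => ¬ good x ∧ p x ≠ 0) with hB'def
  have hsplit : ∑ x ∈ univ.filter good, p x + ∑ x ∈ B, p x = 1 := by
    rw [hBdef, Finset.sum_filter_add_sum_filter_not]
    exact hp1
  have hBB' : ∑ x ∈ B, p x = ∑ x ∈ B', p x := by
    refine (Finset.sum_subset ?_ ?_).symm
    · intro x hx
      simp only [hB'def, Finset.mem_filter] at hx
      simp [hBdef, hx.2.1]
    · intro x hx hx'
      simp only [hBdef, Finset.mem_filter] at hx
      simp only [hB'def, Finset.mem_filter] at hx'
      by_contra h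
      exact hx' ⟨Finset.mem_univ x, hx.2, h⟩
  -- pointwise bound on B'
  have key : ∀ x ∈ B', q x ≤ ε * p x := by
    intro x hx
    simp only [hB'def, Finset.mem_filter] at hx
    obtain ⟨-, hnot, hpne⟩ := hx
    have hppos : 0 < p x := lt_of_le_of_ne (hp0 x) (Ne.symm hpne)
    have hlt : Real.logb 2 (1 / p x) < k - Real.logb 2 (1 / ε) := lt_of_not_ge hnot
    have hloge : Real.logb 2 (1 / ε) = - Real.logb 2 ε := by
      rw [one_div, Real.logb_inv]
    rw [hloge, sub_neg_eq_add] at hlt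
    have h2k : (0:ℝ) < (2:ℝ) ^ k := Real.rpow_pos_of_pos (by norm_num) k
    have hineq : 1 / p x < (2:ℝ) ^ k * ε := by
      have h1 : (2:ℝ) ^ Real.logb 2 (1 / p x) < (2:ℝ) ^ (k + Real.logb 2 ε) :=
        (Real.rpow_lt_rpow_left_iff (by norm_num : (1:ℝ) < 2)).mpr hlt
      rwa [Real.rpow_logb (by positivity) (by norm_num) (by positivity),
        Real.rpow_add (by norm_num), Real.rpow_logb (by norm_num) (by norm_num) hε] at h1
    have hpx : ((2:ℝ) ^ k * ε)⁻¹ < p x := by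
      rw [← one_div]
      rw [div_lt_iff₀ (by positivity)]
      rw [div_lt_iff₀ hppos] at hineq
      linarith [hineq]
    have hq : q x ≤ ((2:ℝ) ^ k)⁻¹ := by
      rcases eq_or_ne (q x) 0 with h | h
      · rw [h]; positivity
      · have hk := hmin x h
        have hqpos : 0 < q x := lt_of_le_of_ne (hq0 x) (Ne.symm h)
        have h1 : (2:ℝ) ^ k ≤ (2:ℝ) ^ Real.logb 2 (1 / q x) :=
          (Real.rpow_le_rpow_left_iff (by norm_num)).mpr hk
        rw [Real.rpow_logb (by positivity) (by norm_num) (by positivity)] at h1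
        rw [one_div] at h1
        rw [← inv_inv (q x)]
        exact inv_anti₀ h2k h1
    calc q x ≤ ((2:ℝ) ^ k)⁻¹ := hq
      _ = ε * ((2:ℝ) ^ k * ε)⁻¹ := by
          field_simp
      _ ≤ ε * p x := by
          exact mul_le_mul_of_nonneg_left hpx.le hε.le
  have hqB' : ∑ x ∈ B', q x ≤ ε * ∑ x ∈ B', p x :=
    (Finset.sum_le_sum key).trans_eq (Finset.mul_sum _ _ _).symm
  have hpB'le1 : ∑ x ∈ B', p x ≤ 1 := by
    rw [← hp1]
    exact Finset.sum_le_sum_of_subset_of_nonneg (Finset.subset_univ _)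
      (fun x _ _ => hp0 x)
  have hcl := hclose B'
  have h1 : ∑ x ∈ B', p x - ∑ x ∈ B', q x ≤ ε := (abs_le.mp hcl).2
  have hpB : ∑ x ∈ B', p x ≤ 2 * ε := by nlinarith
  linarith [hsplit, hBB']
end

section
/- Let X be a random variable on a finite universe, and suppose X is ε-close in statistical distance to a random variable X' with max-entropy at most k. Then with probability at least 1−2ε over x sampled from X, the sample entropy H_X(x) is at most k+log(1/ε). -/
open Finset
open scoped Classical

/-- If X is ε-close to some X' with max-entropy at most k (|supp(X')| ≤ 2^k), then with
probability at least 1−2ε over x ← X, the sample entropy is at most k + log₂(1/ε). -/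
theorem stmt3 {α : Type*} [Fintype α]
    (p q : α → ℝ) (hp0 : ∀ x, 0 ≤ p x) (hp1 : ∑ x, p x = 1)
    (hq0 : ∀ x, 0 ≤ q x) (hq1 : ∑ x, q x = 1)
    (ε k : ℝ) (hε : 0 < ε)
    (hclose : ∀ T : Finset α, |∑ x ∈ T, p x - ∑ x ∈ T, q x| ≤ ε)
    (hmax : ((univ.filter (fun x => q x ≠ 0)).card : ℝ) ≤ 2 ^ k) :
    1 - 2 * ε ≤
      ∑ x ∈ univ.filter (fun x => Real.logb 2 (1 / p x) ≤ k + Real.logb 2 (1 / ε)), p x := by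
  set c := k + Real.logb 2 (1 / ε) with hc
  set B := univ.filter (fun x : α => ¬ (Real.logb 2 (1 / p x) ≤ c)) with hB
  have h2k : (0:ℝ) < 2 ^ k := Real.rpow_pos_of_pos (by norm_num) k
  have hsplit : ∑ x ∈ B, p x
      = ∑ x ∈ B.filter (fun x => q x ≠ 0), p x + ∑ x ∈ B.filter (fun x => ¬ q x ≠ 0), p x :=
    (Finset.sum_filter_add_sum_filter_not B _ p).symm
  have h1 : ∑ x ∈ B.filter (fun x => ¬ q x ≠ 0), p x ≤ ε := by
    have h := hclose (B.filter (fun x => ¬ q x ≠ 0))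
    have hq : ∑ x ∈ B.filter (fun x => ¬ q x ≠ 0), q x = 0 := by
      apply Finset.sum_eq_zero
      intro x hx
      simpa using (Finset.mem_filter.mp hx).2
    rw [hq, sub_zero] at h
    exact (abs_le.mp h).2
  have h2 : ∑ x ∈ B.filter (fun x => q x ≠ 0), p x ≤ ε := by
    have hterm : ∀ x ∈ B.filter (fun x => q x ≠ 0), p x ≤ ε / 2 ^ k := by
      intro x hx
      have hxB : x ∈ B := (Finset.mem_filter.mp hx).1
      have hlt : c < Real.logb 2 (1 / p x) :=
        lt_of_not_ge ((Finset.mem_filter.mp hxB).2)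
      rcases eq_or_lt_of_le (hp0 x) with h0 | h0
      · rw [← h0]; positivity
      · have h1p : (0:ℝ) < 1 / p x := by positivity
        have hlt2 : (2:ℝ) ^ c < 1 / p x := by
          calc (2:ℝ) ^ c < (2:ℝ) ^ (Real.logb 2 (1 / p x)) :=
                (Real.rpow_lt_rpow_left_iff (by norm_num)).mpr hlt
            _ = 1 / p x := Real.rpow_logb (by norm_num) (by norm_num) h1p
        have h2c : (2:ℝ) ^ c = 2 ^ k / ε := by
          rw [hc, Real.rpow_add (by norm_num),
            Real.rpow_logb (by norm_num) (by norm_num) (by positivity)]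
          field_simp
        rw [h2c, div_lt_div_iff₀ hε h0] at hlt2
        rw [le_div_iff₀ h2k]
        nlinarith
    calc ∑ x ∈ B.filter (fun x => q x ≠ 0), p x
        ≤ (B.filter (fun x => q x ≠ 0)).card • (ε / 2 ^ k) :=
          Finset.sum_le_card_nsmul _ _ _ hterm
      _ = ((B.filter (fun x => q x ≠ 0)).card : ℝ) * (ε / 2 ^ k) := by
          rw [nsmul_eq_mul]
      _ ≤ (2 ^ k) * (ε / 2 ^ k) := by
          apply mul_le_mul_of_nonneg_right _ (by positivity)
          refine le_trans ?_ hmax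
          exact_mod_cast Finset.card_le_card (fun x hx => by
            simp only [Finset.mem_filter, Finset.mem_univ, true_and]
            exact (Finset.mem_filter.mp hx).2)
      _ = ε := by field_simp
  have hBle : ∑ x ∈ B, p x ≤ 2 * ε := by rw [hsplit]; linarith
  have htot : (∑ x ∈ univ.filter (fun x : α => Real.logb 2 (1 / p x) ≤ c), p x)
      + ∑ x ∈ B, p x = 1 := by
    rw [hB, Finset.sum_filter_add_sum_filter_not, hp1]
  linarith
end

section
/- Let X be a random variable on a finite universe, A a randomized map with H(A(X;R) | X) ≤ k where R is uniform independent randomness, and p ∈ (0,1). Then there exists a family of sets {L(x)} with x ∈ L(x) and |L(x)| ≤ 2^{k/p} + 1 for every x, such that Pr[A(X;R) ∈ L(X)] ≥ 1 − p. -/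
open Finset
open scoped Classical

/-- From bounded accessible Shannon entropy to p-accessible max-entropy: if
H(A(X;R) | X) ≤ k then there are sets L(x) ∋ x of size at most 2^{k/p}+1 with
Pr[A(X;R) ∈ L(X)] ≥ 1 − p. -/
theorem stmt8 {α : Type*} [Fintype α]
    (p : α → ℝ) (hp0 : ∀ x, 0 ≤ p x) (hp1 : ∑ x, p x = 1)
    (A : α → α → ℝ) (hA0 : ∀ x x', 0 ≤ A x x') (hA1 : ∀ x, ∑ x', A x x' = 1)
    (k pp : ℝ) (hpp0 : 0 < pp) (hpp1 : pp < 1)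
    (hH : ∑ x, p x * ∑ x', A x x' * Real.logb 2 (1 / A x x') ≤ k) :
    ∃ L : α → Finset α, (∀ x, x ∈ L x) ∧
      (∀ x, ((L x).card : ℝ) ≤ 2 ^ (k / pp) + 1) ∧
      1 - pp ≤ ∑ x, p x * ∑ x' ∈ L x, A x x' := by
  classical
  set t : ℝ := (2:ℝ) ^ (-(k/pp)) with ht
  have ht0 : 0 < t := Real.rpow_pos_of_pos two_pos _
  set S : α → Finset α := fun x => Finset.univ.filter (fun x' => t ≤ A x x') with hS
  set L : α → Finset α := fun x => insert x (S x) with hL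
  have hA1' : ∀ x x', A x x' ≤ 1 := by
    intro x x'
    calc A x x' ≤ ∑ y, A x y :=
          Finset.single_le_sum (fun y _ => hA0 x y) (mem_univ x')
      _ = 1 := hA1 x
  have hterm0 : ∀ x x', 0 ≤ A x x' * Real.logb 2 (1 / A x x') := by
    intro x x'
    rcases eq_or_lt_of_le (hA0 x x') with h | h
    · simp [← h]
    · exact mul_nonneg (le_of_lt h) (Real.logb_nonneg one_lt_two
        (one_le_one_div h (hA1' x x')))
  have hH0 : ∀ x, 0 ≤ ∑ x', A x x' * Real.logb 2 (1 / A x x') :=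
    fun x => Finset.sum_nonneg fun x' _ => hterm0 x x'
  have hk : 0 ≤ k :=
    le_trans (Finset.sum_nonneg fun x _ => mul_nonneg (hp0 x) (hH0 x)) hH
  -- cardinality bound
  have hcard : ∀ x, ((L x).card : ℝ) ≤ 2 ^ (k / pp) + 1 := by
    intro x
    have h1 : ((S x).card : ℝ) * t ≤ 1 := by
      calc ((S x).card : ℝ) * t = ∑ _x' ∈ S x, t := by
            rw [Finset.sum_const, nsmul_eq_mul]
        _ ≤ ∑ x' ∈ S x, A x x' :=
            Finset.sum_le_sum fun x' hx' => (Finset.mem_filter.mp hx').2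
        _ ≤ ∑ x', A x x' :=
            Finset.sum_le_sum_of_subset_of_nonneg (Finset.filter_subset _ _)
              (fun y _ _ => hA0 x y)
        _ = 1 := hA1 x
    have h2 : ((S x).card : ℝ) ≤ 2 ^ (k / pp) := by
      have := (le_div_iff₀ ht0).mpr h1
      rwa [ht, one_div, ← Real.rpow_neg (by norm_num), neg_neg] at this
    calc ((L x).card : ℝ) ≤ ((S x).card + 1 : ℕ) := by
          exact_mod_cast Finset.card_insert_le x (S x)
      _ = ((S x).card : ℝ) + 1 := by push_cast; ring
      _ ≤ 2 ^ (k / pp) + 1 := by linarith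
  refine ⟨L, fun x => Finset.mem_insert_self _ _, hcard, ?_⟩
  -- probability bound
  have hsplit : ∀ x, ∑ x' ∈ L x, A x x' + ∑ x' ∈ Finset.univ \ L x, A x x' = 1 := by
    intro x
    rw [add_comm, Finset.sum_sdiff (Finset.subset_univ _)]
    exact hA1 x
  have hQ : ∑ x, p x * ∑ x' ∈ Finset.univ \ L x, A x x' ≤ pp := by
    rcases eq_or_lt_of_le hk with hk0 | hkpos
    · -- k = 0
      have hzero : ∀ x ∈ Finset.univ,
          p x * ∑ x', A x x' * Real.logb 2 (1 / A x x') = 0 := by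
        rw [← Finset.sum_eq_zero_iff_of_nonneg
          (fun x _ => mul_nonneg (hp0 x) (hH0 x))]
        exact le_antisymm (hH.trans (le_of_eq hk0.symm))
          (Finset.sum_nonneg fun x _ => mul_nonneg (hp0 x) (hH0 x))
      have hQ0 : ∑ x, p x * ∑ x' ∈ Finset.univ \ L x, A x x' = 0 := by
        apply Finset.sum_eq_zero
        intro x _
        rcases eq_or_lt_of_le (hp0 x) with hpx | hpx
        · rw [← hpx, zero_mul]
        · have hHx : ∑ x', A x x' * Real.logb 2 (1 / A x x') = 0 := by
            have := hzero x (mem_univ x)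
            exact (mul_eq_zero.mp this).resolve_left (ne_of_gt hpx)
          have hterms : ∀ x' ∈ Finset.univ,
              A x x' * Real.logb 2 (1 / A x x') = 0 :=
            (Finset.sum_eq_zero_iff_of_nonneg (fun x' _ => hterm0 x x')).mp hHx
          have : ∑ x' ∈ Finset.univ \ L x, A x x' = 0 := by
            apply Finset.sum_eq_zero
            intro x' hx'
            have hnotS : x' ∉ S x := fun h =>
              (Finset.mem_sdiff.mp hx').2 (Finset.mem_insert_of_mem h)
            have hlt : A x x' < t := by
              by_contra h
              exact hnotS (Finset.mem_filter.mpr ⟨mem_univ x', le_of_not_gt h⟩)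
            have ht1 : t = 1 := by
              rw [ht, ← hk0]; simp
            rcases eq_or_lt_of_le (hA0 x x') with h0 | h0
            · exact h0.symm
            · exfalso
              have hlog : 0 < Real.logb 2 (1 / A x x') :=
                Real.logb_pos one_lt_two (by
                  rw [lt_one_div one_pos h0]; rw [ht1] at hlt; linarith)
              have := hterms x' (mem_univ x')
              nlinarith
          rw [this, mul_zero]
      rw [hQ0]; exact le_of_lt hpp0
    · -- k > 0
      have key : ∀ x, ∀ x' ∈ Finset.univ \ L x,
          k * A x x' ≤ pp * (A x x' * Real.logb 2 (1 / A x x')) := by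
        intro x x' hx'
        have hnotS : x' ∉ S x := fun h =>
          (Finset.mem_sdiff.mp hx').2 (Finset.mem_insert_of_mem h)
        have hlt : A x x' < t := by
          by_contra h
          exact hnotS (Finset.mem_filter.mpr ⟨mem_univ x', le_of_not_gt h⟩)
        rcases eq_or_lt_of_le (hA0 x x') with h0 | h0
        · rw [← h0]; simp
        · have hinv : (2:ℝ) ^ (k / pp) ≤ 1 / A x x' := by
            rw [le_one_div (Real.rpow_pos_of_pos two_pos _) h0]
            calc A x x' ≤ t := le_of_lt hlt
              _ = ((2:ℝ) ^ (k/pp))⁻¹ := by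
                  rw [ht, Real.rpow_neg (by norm_num)]
              _ ≤ 1 / (2:ℝ) ^ (k/pp) := by rw [one_div]
          have hlog : k / pp ≤ Real.logb 2 (1 / A x x') := by
            calc k / pp = Real.logb 2 ((2:ℝ) ^ (k/pp)) :=
                  (Real.logb_rpow (b := 2) (by norm_num) (by norm_num)).symm
              _ ≤ Real.logb 2 (1 / A x x') :=
                  Real.logb_le_logb_of_le one_lt_two
                    (Real.rpow_pos_of_pos two_pos _) hinv
          have := mul_le_mul_of_nonneg_left hlog (le_of_lt h0)
          calc k * A x x' = pp * (A x x' * (k / pp)) := by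
                field_simp
            _ ≤ pp * (A x x' * Real.logb 2 (1 / A x x')) := by
                apply mul_le_mul_of_nonneg_left _ (le_of_lt hpp0)
                exact this
      have step : k * (∑ x, p x * ∑ x' ∈ Finset.univ \ L x, A x x') ≤ pp * k := by
        calc k * (∑ x, p x * ∑ x' ∈ Finset.univ \ L x, A x x')
            = ∑ x, p x * ∑ x' ∈ Finset.univ \ L x, k * A x x' := by
              rw [Finset.mul_sum]
              refine Finset.sum_congr rfl fun x _ => ?_
              rw [← Finset.mul_sum]; ring
          _ ≤ ∑ x, p x * ∑ x' ∈ Finset.univ \ L x,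
                pp * (A x x' * Real.logb 2 (1 / A x x')) := by
              apply Finset.sum_le_sum
              intro x _
              exact mul_le_mul_of_nonneg_left
                (Finset.sum_le_sum (key x)) (hp0 x)
          _ ≤ ∑ x, p x * ∑ x',
                pp * (A x x' * Real.logb 2 (1 / A x x')) := by
              apply Finset.sum_le_sum
              intro x _
              apply mul_le_mul_of_nonneg_left _ (hp0 x)
              exact Finset.sum_le_sum_of_subset_of_nonneg
                (Finset.subset_univ _)
                (fun y _ _ => mul_nonneg (le_of_lt hpp0) (hterm0 x y))
          _ = pp * ∑ x, p x * ∑ x', A x x' * Real.logb 2 (1 / A x x') := by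
              rw [Finset.mul_sum]
              refine Finset.sum_congr rfl fun x _ => ?_
              rw [← Finset.mul_sum]; ring
          _ ≤ pp * k := mul_le_mul_of_nonneg_left hH (le_of_lt hpp0)
      nlinarith [step]
  have hexp : ∑ x, p x * ∑ x' ∈ L x, A x x'
      = 1 - ∑ x, p x * ∑ x' ∈ Finset.univ \ L x, A x x' := by
    have : ∑ x, p x * ∑ x' ∈ L x, A x x'
        + ∑ x, p x * ∑ x' ∈ Finset.univ \ L x, A x x' = 1 := by
      rw [← Finset.sum_add_distrib]
      calc ∑ x, (p x * ∑ x' ∈ L x, A x x'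
            + p x * ∑ x' ∈ Finset.univ \ L x, A x x')
          = ∑ x, p x * (∑ x' ∈ L x, A x x'
            + ∑ x' ∈ Finset.univ \ L x, A x x') := by
            refine Finset.sum_congr rfl fun x _ => by ring
        _ = ∑ x, p x := by
            refine Finset.sum_congr rfl fun x _ => by rw [hsplit x, mul_one]
        _ = 1 := hp1
    linarith
  rw [hexp]
  linarith
end

section
/- Let F : {0,1}^n → {0,1}^m and X uniform on {0,1}^n such that with probability 1−δ over x ← X, log₂|F^{-1}(F(x))| ≥ k (real min-entropy at least k up to δ). Let G be a family of pairwise independent hash functions g : {0,1}^n → {0,1}^ℓ and define F'(x,g) = (F(x), g, g(x)). Then for every s > 0 and every fixed g ∈ G, with probability at least 1 − 2^{-s} − δ over x ← X, we have Pr[X = x | F'(X,g) = F'(x,g)] ≤ 2^{-(k−ℓ−s)}. -/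
open Finset
open scoped Classical

/-- Entropy reduction preserves real min-entropy: if for all but a δ-fraction of x we have
|F⁻¹(F(x))| ≥ 2^k, and g is a member of a pairwise independent hash family into {0,1}^ℓ,
then for F'(x,g)=(F(x),g,g(x)), with probability at least 1 − 2^{−s} − δ over uniform x,
Pr[X = x | F'(X,g) = F'(x,g)] ≤ 2^{−(k−ℓ−s)}. -/
theorem stmt13 (n m ℓ : ℕ) (F : (Fin n → Bool) → (Fin m → Bool))
    (k s δ : ℝ) (hs : 0 < s) (hδ : 0 ≤ δ)
    (hreal : (1 - δ) * 2 ^ n ≤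
      ((univ.filter (fun x : Fin n → Bool =>
          (2 : ℝ) ^ k ≤ ((univ.filter (fun x' => F x' = F x)).card : ℝ))).card : ℝ))
    {I : Type*} [Fintype I] [Nonempty I]
    (g : I → (Fin n → Bool) → (Fin ℓ → Bool))
    (hpair : ∀ x x' : Fin n → Bool, x ≠ x' → ∀ v w : Fin ℓ → Bool,
      ((univ.filter (fun i => g i x = v ∧ g i x' = w)).card : ℝ) =
        (Fintype.card I : ℝ) / 2 ^ (2 * ℓ))
    (i : I) :
    (1 - (2 : ℝ) ^ (-s) - δ) * 2 ^ n ≤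
      ((univ.filter (fun x : Fin n → Bool =>
          (1 : ℝ) / ((univ.filter (fun x' => F x' = F x ∧ g i x' = g i x)).card : ℝ) ≤
            2 ^ (-(k - ℓ - s)))).card : ℝ) := by
  classical
  have h2 : (0:ℝ) < 2 := by norm_num
  set h : (Fin n → Bool) → (Fin ℓ → Bool) := g i with hh
  set Good : Finset (Fin n → Bool) := univ.filter (fun x : Fin n → Bool =>
      (2 : ℝ) ^ k ≤ ((univ.filter (fun x' => F x' = F x)).card : ℝ)) with hGoodDef
  set Bad : Finset (Fin n → Bool) := Good.filter (fun x =>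
      ((univ.filter (fun x' => F x' = F x ∧ h x' = h x)).card : ℝ) < (2:ℝ) ^ (k - ℓ - s))
    with hBadDef
  have hBadSub : Bad ⊆ Good := filter_subset _ _
  -- Key counting bound on Bad
  have key : (Bad.card : ℝ) ≤ 2 ^ (-s) * 2 ^ n := by
    set Y : Finset (Fin m → Bool) := univ.filter
      (fun y => (Bad.filter (fun x => F x = y)).Nonempty) with hYdef
    -- per-fiber bound
    have perY : ∀ y ∈ Y, ((Bad.filter (fun x => F x = y)).card : ℝ)
        ≤ (2:ℝ) ^ (ℓ:ℝ) * 2 ^ (k - ℓ - s) := by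
      intro y _
      have hsplit : (Bad.filter (fun x => F x = y)).card
          = ∑ z : (Fin ℓ → Bool),
            ((Bad.filter (fun x => F x = y)).filter (fun x => h x = z)).card :=
        Finset.card_eq_sum_card_fiberwise (fun x _ => mem_univ (h x))
      have hterm : ∀ z : (Fin ℓ → Bool),
          (((Bad.filter (fun x => F x = y)).filter (fun x => h x = z)).card : ℝ)
            ≤ 2 ^ (k - ℓ - s) := by
        intro z
        by_cases hne : ((Bad.filter (fun x => F x = y)).filter (fun x => h x = z)).Nonempty
        · obtain ⟨x, hx⟩ := hne
          have hxBad : x ∈ Bad := (mem_filter.mp (mem_filter.mp hx).1).1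
          have hxy : F x = y := (mem_filter.mp (mem_filter.mp hx).1).2
          have hxz : h x = z := (mem_filter.mp hx).2
          have hsub : (Bad.filter (fun x => F x = y)).filter (fun x => h x = z)
              ⊆ univ.filter (fun x' => F x' = F x ∧ h x' = h x) := by
            intro x' hx'
            have h1 : x' ∈ Bad.filter (fun x => F x = y) := (mem_filter.mp hx').1
            have h2' : h x' = z := (mem_filter.mp hx').2
            have h3 : F x' = y := (mem_filter.mp h1).2
            exact mem_filter.mpr ⟨mem_univ _, by rw [h3, hxy], by rw [h2', hxz]⟩
          have hc := Finset.card_le_card hsub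
          have hcell : ((univ.filter (fun x' => F x' = F x ∧ h x' = h x)).card : ℝ)
              < 2 ^ (k - ℓ - s) := (mem_filter.mp hxBad).2
          calc (((Bad.filter (fun x => F x = y)).filter (fun x => h x = z)).card : ℝ)
              ≤ ((univ.filter (fun x' => F x' = F x ∧ h x' = h x)).card : ℝ) := by
                exact_mod_cast hc
            _ ≤ 2 ^ (k - ℓ - s) := le_of_lt hcell
        · rw [Finset.not_nonempty_iff_eq_empty.mp hne]
          simp only [Finset.card_empty, Nat.cast_zero]
          positivity
      have hsum : ((Bad.filter (fun x => F x = y)).card : ℝ)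
          = ∑ z : (Fin ℓ → Bool),
            (((Bad.filter (fun x => F x = y)).filter (fun x => h x = z)).card : ℝ) := by
        rw [hsplit]; push_cast; ring
      rw [hsum]
      calc ∑ z : (Fin ℓ → Bool),
            (((Bad.filter (fun x => F x = y)).filter (fun x => h x = z)).card : ℝ)
          ≤ ∑ _z : (Fin ℓ → Bool), (2:ℝ) ^ (k - ℓ - s) :=
            Finset.sum_le_sum (fun z _ => hterm z)
        _ = (Fintype.card (Fin ℓ → Bool) : ℝ) * 2 ^ (k - ℓ - s) := by
            rw [Finset.sum_const, Finset.card_univ, nsmul_eq_mul]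
        _ = (2:ℝ) ^ (ℓ:ℝ) * 2 ^ (k - ℓ - s) := by
            have : Fintype.card (Fin ℓ → Bool) = 2 ^ ℓ := by simp
            rw [this]
            push_cast
            rw [Real.rpow_natCast]
    -- count of relevant fibers
    have hYcard : (Y.card : ℝ) * 2 ^ k ≤ 2 ^ n := by
      have hfib : ∀ y ∈ Y, (2:ℝ) ^ k ≤ ((univ.filter (fun x => F x = y)).card : ℝ) := by
        intro y hy
        obtain ⟨x, hx⟩ := (mem_filter.mp hy).2
        have hxGood : x ∈ Good := hBadSub (mem_filter.mp hx).1
        have hxy : F x = y := (mem_filter.mp hx).2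
        have := (mem_filter.mp hxGood).2
        rwa [hxy] at this
      have hsum2 : ∑ y ∈ Y, ((univ.filter (fun x => F x = y)).card : ℝ) ≤ 2 ^ n := by
        have h1 : ∑ y ∈ Y, ((univ.filter (fun x => F x = y)).card)
            ≤ ∑ y : (Fin m → Bool), ((univ.filter (fun x => F x = y)).card) :=
          Finset.sum_le_sum_of_subset (subset_univ Y)
        have h2' : ∑ y : (Fin m → Bool), ((univ.filter (fun x => F x = y)).card)
            = (univ : Finset (Fin n → Bool)).card :=
          (Finset.card_eq_sum_card_fiberwise (fun x _ => mem_univ (F x))).symm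
        have h3 : (univ : Finset (Fin n → Bool)).card = 2 ^ n := by simp
        have : ∑ y ∈ Y, ((univ.filter (fun x => F x = y)).card) ≤ 2 ^ n := by
          rw [← h3, ← h2']; exact h1
        calc ∑ y ∈ Y, ((univ.filter (fun x => F x = y)).card : ℝ)
            = ((∑ y ∈ Y, (univ.filter (fun x => F x = y)).card : ℕ) : ℝ) := by push_cast; ring
          _ ≤ ((2 ^ n : ℕ) : ℝ) := by exact_mod_cast this
          _ = 2 ^ n := by push_cast; ring
      calc (Y.card : ℝ) * 2 ^ k = ∑ _y ∈ Y, (2:ℝ) ^ k := by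
            rw [Finset.sum_const, nsmul_eq_mul]
        _ ≤ ∑ y ∈ Y, ((univ.filter (fun x => F x = y)).card : ℝ) :=
            Finset.sum_le_sum hfib
        _ ≤ 2 ^ n := hsum2
    -- combine
    have hBadEq : (Bad.card : ℝ) = ∑ y ∈ Y, ((Bad.filter (fun x => F x = y)).card : ℝ) := by
      have hfw : Bad.card = ∑ y : (Fin m → Bool), (Bad.filter (fun x => F x = y)).card :=
        Finset.card_eq_sum_card_fiberwise (fun x _ => mem_univ (F x))
      have hzero : ∀ y ∈ (univ : Finset (Fin m → Bool)), y ∉ Y →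
          (Bad.filter (fun x => F x = y)).card = 0 := by
        intro y _ hy
        have : ¬ (Bad.filter (fun x => F x = y)).Nonempty := by
          intro hcon
          exact hy (mem_filter.mpr ⟨mem_univ _, hcon⟩)
        rw [Finset.not_nonempty_iff_eq_empty.mp this]; rfl
      have := Finset.sum_subset (subset_univ Y) hzero
      rw [hfw, ← this]
      push_cast; ring
    have hpowk : (0:ℝ) < 2 ^ k := Real.rpow_pos_of_pos h2 k
    have hstep1 : (Bad.card : ℝ) ≤ (Y.card : ℝ) * ((2:ℝ) ^ (ℓ:ℝ) * 2 ^ (k - ℓ - s)) := by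
      rw [hBadEq]
      calc ∑ y ∈ Y, ((Bad.filter (fun x => F x = y)).card : ℝ)
          ≤ ∑ _y ∈ Y, (2:ℝ) ^ (ℓ:ℝ) * 2 ^ (k - ℓ - s) := Finset.sum_le_sum perY
        _ = (Y.card : ℝ) * ((2:ℝ) ^ (ℓ:ℝ) * 2 ^ (k - ℓ - s)) := by
            rw [Finset.sum_const, nsmul_eq_mul]
    have hmerge : (2:ℝ) ^ (ℓ:ℝ) * 2 ^ (k - ℓ - s) = 2 ^ k * 2 ^ (-s) := by
      rw [← Real.rpow_add h2, ← Real.rpow_add h2]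
      ring_nf
    have hYnn : (0:ℝ) ≤ (Y.card : ℝ) := Nat.cast_nonneg _
    have hsneg : (0:ℝ) < 2 ^ (-s) := Real.rpow_pos_of_pos h2 (-s)
    calc (Bad.card : ℝ) ≤ (Y.card : ℝ) * ((2:ℝ) ^ (ℓ:ℝ) * 2 ^ (k - ℓ - s)) := hstep1
      _ = ((Y.card : ℝ) * 2 ^ k) * 2 ^ (-s) := by rw [hmerge]; ring
      _ ≤ 2 ^ n * 2 ^ (-s) := by
          apply mul_le_mul_of_nonneg_right hYcard (le_of_lt hsneg)
      _ = 2 ^ (-s) * 2 ^ n := by ring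
  -- Good \ Bad is contained in the target set
  have hsub : Good \ Bad ⊆ univ.filter (fun x : Fin n → Bool =>
      (1 : ℝ) / ((univ.filter (fun x' => F x' = F x ∧ g i x' = g i x)).card : ℝ) ≤
        2 ^ (-(k - ℓ - s))) := by
    intro x hx
    have hxG : x ∈ Good := (mem_sdiff.mp hx).1
    have hxnB : x ∉ Bad := (mem_sdiff.mp hx).2
    have hge : (2:ℝ) ^ (k - ℓ - s)
        ≤ ((univ.filter (fun x' => F x' = F x ∧ h x' = h x)).card : ℝ) := by
      by_contra hcon
      push_neg at hcon
      exact hxnB (mem_filter.mpr ⟨hxG, hcon⟩)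
    have hpos : (0:ℝ) < 2 ^ (k - ℓ - s) := Real.rpow_pos_of_pos h2 _
    refine mem_filter.mpr ⟨mem_univ _, ?_⟩
    have : (1:ℝ) / ((univ.filter (fun x' => F x' = F x ∧ h x' = h x)).card : ℝ)
        ≤ 1 / (2:ℝ) ^ (k - ℓ - s) := one_div_le_one_div_of_le hpos hge
    calc (1 : ℝ) / ((univ.filter (fun x' => F x' = F x ∧ g i x' = g i x)).card : ℝ)
        ≤ 1 / (2:ℝ) ^ (k - ℓ - s) := this
      _ = 2 ^ (-(k - ℓ - s)) := by
          rw [Real.rpow_neg (le_of_lt h2), one_div]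
  -- finish
  have hcardsd : ((Good \ Bad).card : ℝ) = (Good.card : ℝ) - (Bad.card : ℝ) := by
    rw [Finset.card_sdiff_of_subset hBadSub]
    push_cast [Nat.cast_sub (Finset.card_le_card hBadSub)]
    ring
  have hfinal : ((Good \ Bad).card : ℝ)
      ≤ ((univ.filter (fun x : Fin n → Bool =>
        (1 : ℝ) / ((univ.filter (fun x' => F x' = F x ∧ g i x' = g i x)).card : ℝ) ≤
          2 ^ (-(k - ℓ - s)))).card : ℝ) := by
    exact_mod_cast Finset.card_le_card hsub
  have hGoodreal : (1 - δ) * 2 ^ n ≤ (Good.card : ℝ) := hreal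
  calc (1 - (2 : ℝ) ^ (-s) - δ) * 2 ^ n
      = (1 - δ) * 2 ^ n - 2 ^ (-s) * 2 ^ n := by ring
    _ ≤ (Good.card : ℝ) - (Bad.card : ℝ) := by
        apply sub_le_sub hGoodreal key
    _ = ((Good \ Bad).card : ℝ) := hcardsd.symm
    _ ≤ _ := hfinal
end

section
/- Let f : {0,1}^n → {0,1}^n, let X be uniform on {0,1}^n, let i ∈ [n], and let w ∈ {0,1}^i. Let G be a family of pairwise independent hash functions g mapping strings of length at most n to {0,1}^n. Let x* ∈ {0,1}^n satisfy H_{f(X)}(f(x*)) ≥ i, i.e., |f^{-1}(f(x*))| ≤ 2^{n−i}. Then Pr[x = x*] ≥ 2^{-n}/10, where g is uniform in G and x is uniform in (g∘f)^{-1}(w) := {x : g(f(x))_{1…i} = w} (set to {⊥} if empty). -/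
open Finset
open scoped Classical

lemma extCard (n i : ℕ) (hin : i ≤ n) (w : Fin i → Bool) :
    (univ.filter (fun v : Fin n → Bool => ∀ t : Fin i, v (Fin.castLE hin t) = w t)).card
      = 2 ^ (n - i) := by
  have : (univ.filter (fun v : Fin n → Bool => ∀ t : Fin i, v (Fin.castLE hin t) = w t)).card
      = (univ : Finset (Fin (n - i) → Bool)).card := by
    apply Finset.card_bij' (fun v _ => fun s : Fin (n - i) => v ⟨i + s.1, by omega⟩)
      (fun u _ => fun j : Fin n => if h : j.1 < i then w ⟨j.1, h⟩ else u ⟨j.1 - i, by omega⟩)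
    · intro v hv
      simp only [mem_filter, mem_univ, true_and] at hv
      funext j
      by_cases h : j.1 < i
      · simp only [dif_pos h]
        have := hv ⟨j.1, h⟩
        simpa [Fin.castLE] using this.symm
      · simp only [dif_neg h]
        congr 1
        ext
        simp only []
        omega
    · intro u hu
      funext s
      have h : ¬ (i + s.1 < i) := by omega
      simp [h]
    · intro v hv
      simp
    · intro u hu
      simp only [mem_filter, mem_univ, true_and]
      intro t
      have h : (Fin.castLE hin t).1 < i := t.2
      simp [Fin.castLE, h]
  rw [this]
  simp

lemma prefix_split {I : Type*} [Fintype I] (n i : ℕ) (hin : i ≤ n) (w : Fin i → Bool)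
    (p : I → (Fin n → Bool)) (q : I → Prop) :
    (univ.filter (fun j => (∀ t : Fin i, p j (Fin.castLE hin t) = w t) ∧ q j)).card
      = ∑ v ∈ univ.filter (fun v : Fin n → Bool => ∀ t : Fin i, v (Fin.castLE hin t) = w t),
          (univ.filter (fun j => p j = v ∧ q j)).card := by
  simp only [Finset.card_filter]
  rw [Finset.sum_comm]
  refine Finset.sum_congr rfl fun j _ => ?_
  by_cases hq : q j
  · simp only [hq, and_true]
    rw [Finset.sum_ite_eq (filter (fun v : Fin n → Bool => ∀ t : Fin i, v (Fin.castLE hin t) = w t) univ) (p j) (fun _ => 1)]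
    by_cases h : ∀ t : Fin i, p j (Fin.castLE hin t) = w t
    · simp [h]
    · simp [h]
  · simp [hq]

lemma single_unif (n : ℕ) (hn : 1 ≤ n) {I : Type*} [Fintype I]
    (g : I → (Fin n → Bool) → (Fin n → Bool))
    (hpair : ∀ y y' : Fin n → Bool, y ≠ y' → ∀ v v' : Fin n → Bool,
      ((univ.filter (fun j => g j y = v ∧ g j y' = v')).card : ℝ) =
        (Fintype.card I : ℝ) / 2 ^ (2 * n))
    (y v : Fin n → Bool) :
    ((univ.filter (fun j => g j y = v)).card : ℝ) = (Fintype.card I : ℝ) / 2 ^ n := by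
  have : Nonempty (Fin n) := ⟨⟨0, by omega⟩⟩
  obtain ⟨y', hy'⟩ := exists_ne y
  have key : (univ.filter (fun j => g j y = v)).card
      = ∑ v' : Fin n → Bool, (univ.filter (fun j => g j y = v ∧ g j y' = v')).card := by
    simp only [Finset.card_filter]
    rw [Finset.sum_comm]
    refine Finset.sum_congr rfl fun j _ => ?_
    by_cases h : g j y = v
    · simp [h]
    · simp [h]
  have card2 : (Fintype.card (Fin n → Bool) : ℝ) = 2 ^ n := by simp
  calc ((univ.filter (fun j => g j y = v)).card : ℝ)
      = ∑ v' : Fin n → Bool, ((univ.filter (fun j => g j y = v ∧ g j y' = v')).card : ℝ) := by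
        rw [key]; push_cast; ring
    _ = ∑ _v' : Fin n → Bool, (Fintype.card I : ℝ) / 2 ^ (2 * n) := by
        refine Finset.sum_congr rfl fun v' _ => hpair y y' hy'.symm v v'
    _ = 2 ^ n * ((Fintype.card I : ℝ) / 2 ^ (2 * n)) := by
        rw [Finset.sum_const, card_univ, nsmul_eq_mul, card2]
    _ = (Fintype.card I : ℝ) / 2 ^ n := by
        rw [two_mul, pow_add]; field_simp

lemma prefix_single (n i : ℕ) (hi1 : 1 ≤ i) (hin : i ≤ n) (w : Fin i → Bool)
    {I : Type*} [Fintype I]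
    (g : I → (Fin n → Bool) → (Fin n → Bool))
    (hpair : ∀ y y' : Fin n → Bool, y ≠ y' → ∀ v v' : Fin n → Bool,
      ((univ.filter (fun j => g j y = v ∧ g j y' = v')).card : ℝ) =
        (Fintype.card I : ℝ) / 2 ^ (2 * n))
    (y : Fin n → Bool) :
    ((univ.filter (fun j => ∀ t : Fin i, g j y (Fin.castLE hin t) = w t)).card : ℝ)
      = (Fintype.card I : ℝ) / 2 ^ i := by
  have hn : 1 ≤ n := le_trans hi1 hin
  have h1 := prefix_split n i hin w (fun j : I => g j y) (fun _ => True)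
  simp only [and_true] at h1
  have hpow : (2:ℝ) ^ (n - i) * 2 ^ i = 2 ^ n := by
    rw [← pow_add, Nat.sub_add_cancel hin]
  calc ((univ.filter (fun j => ∀ t : Fin i, g j y (Fin.castLE hin t) = w t)).card : ℝ)
      = ∑ v ∈ univ.filter (fun v : Fin n → Bool => ∀ t : Fin i, v (Fin.castLE hin t) = w t),
          ((univ.filter (fun j => g j y = v)).card : ℝ) := by rw [h1]; push_cast; ring
    _ = ∑ v ∈ univ.filter (fun v : Fin n → Bool => ∀ t : Fin i, v (Fin.castLE hin t) = w t),
          (Fintype.card I : ℝ) / 2 ^ n := by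
        exact Finset.sum_congr rfl fun v _ => single_unif n hn g hpair y v
    _ = (2 ^ (n - i) : ℝ) * ((Fintype.card I : ℝ) / 2 ^ n) := by
        rw [Finset.sum_const, extCard n i hin w, nsmul_eq_mul]; push_cast; ring
    _ = (Fintype.card I : ℝ) / 2 ^ i := by
        rw [← hpow]; field_simp

lemma prefix_pair (n i : ℕ) (hi1 : 1 ≤ i) (hin : i ≤ n) (w : Fin i → Bool)
    {I : Type*} [Fintype I]
    (g : I → (Fin n → Bool) → (Fin n → Bool))
    (hpair : ∀ y y' : Fin n → Bool, y ≠ y' → ∀ v v' : Fin n → Bool,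
      ((univ.filter (fun j => g j y = v ∧ g j y' = v')).card : ℝ) =
        (Fintype.card I : ℝ) / 2 ^ (2 * n))
    (y y' : Fin n → Bool) (hyy : y ≠ y') :
    ((univ.filter (fun j => (∀ t : Fin i, g j y (Fin.castLE hin t) = w t) ∧
        (∀ t : Fin i, g j y' (Fin.castLE hin t) = w t))).card : ℝ)
      = (Fintype.card I : ℝ) / 2 ^ (2 * i) := by
  set V := univ.filter (fun v : Fin n → Bool => ∀ t : Fin i, v (Fin.castLE hin t) = w t) with hV
  have h1 : (univ.filter (fun j : I => (∀ t : Fin i, g j y (Fin.castLE hin t) = w t) ∧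
        (∀ t : Fin i, g j y' (Fin.castLE hin t) = w t))).card
      = ∑ v ∈ V, (univ.filter (fun j : I => g j y = v ∧
          ∀ t : Fin i, g j y' (Fin.castLE hin t) = w t)).card := by
    convert prefix_split n i hin w (fun j : I => g j y)
      (fun j => ∀ t : Fin i, g j y' (Fin.castLE hin t) = w t) using 2 <;> congr!
  have h2 : ∀ v : Fin n → Bool,
      ((univ.filter (fun j => g j y = v ∧ ∀ t : Fin i, g j y' (Fin.castLE hin t) = w t)).card : ℝ)
        = (2 ^ (n - i) : ℝ) * ((Fintype.card I : ℝ) / 2 ^ (2 * n)) := by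
    intro v
    have hcomm : univ.filter (fun j : I => g j y = v ∧ ∀ t : Fin i, g j y' (Fin.castLE hin t) = w t)
        = univ.filter (fun j : I => (∀ t : Fin i, g j y' (Fin.castLE hin t) = w t) ∧ g j y = v) := by
      apply Finset.filter_congr
      intro j _
      constructor <;> exact fun h => ⟨h.2, h.1⟩
    rw [hcomm]
    have h3 : (univ.filter (fun j : I => (∀ t : Fin i, g j y' (Fin.castLE hin t) = w t) ∧
          g j y = v)).card
        = ∑ v' ∈ V, (univ.filter (fun j : I => g j y' = v' ∧ g j y = v)).card := by
      convert prefix_split n i hin w (fun j : I => g j y') (fun j => g j y = v)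
        using 2 <;> congr!
    rw [h3]
    push_cast
    have h4 : ∀ v' ∈ V, ((univ.filter (fun j : I => g j y' = v' ∧ g j y = v)).card : ℝ)
        = (Fintype.card I : ℝ) / 2 ^ (2 * n) := by
      intro v' _
      have hcomm2 : univ.filter (fun j : I => g j y' = v' ∧ g j y = v)
          = univ.filter (fun j : I => g j y = v ∧ g j y' = v') := by
        apply Finset.filter_congr
        intro j _
        constructor <;> exact fun h => ⟨h.2, h.1⟩
      rw [hcomm2]
      exact hpair y y' hyy v v'
    rw [Finset.sum_congr rfl h4, Finset.sum_const, nsmul_eq_mul]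
    rw [show V.card = 2 ^ (n - i) from extCard n i hin w]
    push_cast; ring
  have hpow : (2:ℝ) ^ (n - i) * 2 ^ i = 2 ^ n := by
    rw [← pow_add, Nat.sub_add_cancel hin]
  calc ((univ.filter (fun j => (∀ t : Fin i, g j y (Fin.castLE hin t) = w t) ∧
        (∀ t : Fin i, g j y' (Fin.castLE hin t) = w t))).card : ℝ)
      = ∑ v ∈ V, ((univ.filter (fun j => g j y = v ∧
          ∀ t : Fin i, g j y' (Fin.castLE hin t) = w t)).card : ℝ) := by
        rw [h1]; push_cast; ring
    _ = ∑ _v ∈ V, (2 ^ (n - i) : ℝ) * ((Fintype.card I : ℝ) / 2 ^ (2 * n)) :=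
        Finset.sum_congr rfl fun v _ => h2 v
    _ = (2 ^ (n - i) : ℝ) * ((2 ^ (n - i) : ℝ) * ((Fintype.card I : ℝ) / 2 ^ (2 * n))) := by
        rw [Finset.sum_const, nsmul_eq_mul, show V.card = 2 ^ (n - i) from extCard n i hin w]
        push_cast; ring
    _ = (Fintype.card I : ℝ) / 2 ^ (2 * i) := by
        have e1 : (2:ℝ) ^ (2 * n) = (2 ^ n) * (2 ^ n) := by rw [two_mul, pow_add]
        have e2 : (2:ℝ) ^ (2 * i) = (2 ^ i) * (2 ^ i) := by rw [two_mul, pow_add]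
        rw [e1, e2, ← hpow]; field_simp

/-- Hashing a one-way function's output: if x* has a light image under f,
i.e. |f⁻¹(f(x*))| ≤ 2^{n−i}, then the probability that a uniform element of
{x : g(f(x))_{1…i} = w}, for g uniform in a pairwise independent family, equals x*
is at least 2^{−n}/10. -/
theorem stmt17 (n i : ℕ) (hi1 : 1 ≤ i) (hin : i ≤ n)
    (f : (Fin n → Bool) → (Fin n → Bool)) (w : Fin i → Bool)
    {I : Type*} [Fintype I] [Nonempty I]
    (g : I → (Fin n → Bool) → (Fin n → Bool))
    (hpair : ∀ y y' : Fin n → Bool, y ≠ y' → ∀ v v' : Fin n → Bool,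
      ((univ.filter (fun j => g j y = v ∧ g j y' = v')).card : ℝ) =
        (Fintype.card I : ℝ) / 2 ^ (2 * n))
    (xs : Fin n → Bool)
    (hxs : (univ.filter (fun x => f x = f xs)).card ≤ 2 ^ (n - i)) :
    (2 : ℝ) ^ (-(n : ℝ)) / 10 ≤
      (1 / (Fintype.card I : ℝ)) * ∑ j : I,
        (if xs ∈ univ.filter (fun x : Fin n → Bool =>
              ∀ t : Fin i, g j (f x) (Fin.castLE hin t) = w t) then
          1 / (((univ.filter (fun x : Fin n → Bool =>
              ∀ t : Fin i, g j (f x) (Fin.castLE hin t) = w t)).card : ℝ))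
        else 0) := by
  have hpow : (2:ℝ) ^ (n - i) * 2 ^ i = 2 ^ n := by
    rw [← pow_add, Nat.sub_add_cancel hin]
  have hIpos : (0:ℝ) < (Fintype.card I : ℝ) := by exact_mod_cast Fintype.card_pos
  let Sfun : I → Finset (Fin n → Bool) := fun j =>
    univ.filter (fun x : Fin n → Bool => ∀ t : Fin i, g j (f x) (Fin.castLE hin t) = w t)
  let Bf : I → Finset (Fin n → Bool) := fun j =>
    univ.filter (fun x : Fin n → Bool =>
      (∀ t : Fin i, g j (f x) (Fin.castLE hin t) = w t) ∧ f x ≠ f xs)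
  let E : Finset I := univ.filter (fun j => ∀ t : Fin i, g j (f xs) (Fin.castLE hin t) = w t)
  show (2 : ℝ) ^ (-(n : ℝ)) / 10 ≤
      (1 / (Fintype.card I : ℝ)) * ∑ j : I,
        (if xs ∈ Sfun j then 1 / (((Sfun j).card : ℝ)) else 0)
  -- the sum over E
  have hsum : (∑ j : I, (if xs ∈ Sfun j then 1 / (((Sfun j).card : ℝ)) else 0))
      = ∑ j ∈ E, 1 / (((Sfun j).card : ℝ)) := by
    rw [Finset.sum_filter]
    refine Finset.sum_congr rfl fun j _ => ?_
    by_cases h : ∀ t : Fin i, g j (f xs) (Fin.castLE hin t) = w t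
    · rw [if_pos h, if_pos (by simp [Sfun, h])]
    · rw [if_neg h, if_neg (by simp [Sfun, h])]
  -- card of E
  have hE : ((E.card) : ℝ) = (Fintype.card I : ℝ) / 2 ^ i := by
    have := prefix_single n i hi1 hin w g hpair (f xs)
    convert this using 3 <;> congr!
  -- sum of |Bf j| over E is small
  have hBsum : ∑ j ∈ E, ((Bf j).card : ℝ) ≤ 2 ^ n * ((Fintype.card I : ℝ) / 2 ^ (2 * i)) := by
    have swap : ∑ j ∈ E, (Bf j).card
        = ∑ x : Fin n → Bool, (E.filter (fun j =>
            (∀ t : Fin i, g j (f x) (Fin.castLE hin t) = w t) ∧ f x ≠ f xs)).card := by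
      simp only [Bf, Finset.card_filter]
      rw [Finset.sum_comm]
    have perx : ∀ x : Fin n → Bool, ((E.filter (fun j =>
        (∀ t : Fin i, g j (f x) (Fin.castLE hin t) = w t) ∧ f x ≠ f xs)).card : ℝ)
          ≤ (Fintype.card I : ℝ) / 2 ^ (2 * i) := by
      intro x
      by_cases hx : f x = f xs
      · have hempty : E.filter (fun j =>
            (∀ t : Fin i, g j (f x) (Fin.castLE hin t) = w t) ∧ f x ≠ f xs) = ∅ := by
          apply Finset.filter_false_of_mem
          intro j _
          simp [hx]
        rw [hempty]
        simp only [Finset.card_empty, Nat.cast_zero]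
        positivity
      · have heq : E.filter (fun j =>
            (∀ t : Fin i, g j (f x) (Fin.castLE hin t) = w t) ∧ f x ≠ f xs)
            = univ.filter (fun j =>
                (∀ t : Fin i, g j (f xs) (Fin.castLE hin t) = w t) ∧
                (∀ t : Fin i, g j (f x) (Fin.castLE hin t) = w t)) := by
          rw [show E = univ.filter (fun j => ∀ t : Fin i, g j (f xs) (Fin.castLE hin t) = w t)
              from rfl, Finset.filter_filter]
          apply Finset.filter_congr
          intro j _
          constructor
          · rintro ⟨h1, h2, _⟩; exact ⟨h1, h2⟩
          · rintro ⟨h1, h2⟩; exact ⟨h1, h2, hx⟩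
        rw [heq]
        have hpp := prefix_pair n i hi1 hin w g hpair (f xs) (f x) (Ne.symm hx)
        have : ((univ.filter (fun j =>
            (∀ t : Fin i, g j (f xs) (Fin.castLE hin t) = w t) ∧
            (∀ t : Fin i, g j (f x) (Fin.castLE hin t) = w t))).card : ℝ)
            = (Fintype.card I : ℝ) / 2 ^ (2 * i) := by
          convert hpp using 3 <;> congr!
        rw [this]
    calc ∑ j ∈ E, ((Bf j).card : ℝ)
        = ∑ x : Fin n → Bool, ((E.filter (fun j =>
            (∀ t : Fin i, g j (f x) (Fin.castLE hin t) = w t) ∧ f x ≠ f xs)).card : ℝ) := by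
          rw [show ∑ j ∈ E, ((Bf j).card : ℝ) = ((∑ j ∈ E, (Bf j).card : ℕ) : ℝ) from by
            push_cast; ring, swap]; push_cast; ring
      _ ≤ ∑ _x : Fin n → Bool, (Fintype.card I : ℝ) / 2 ^ (2 * i) :=
          Finset.sum_le_sum fun x _ => perx x
      _ = 2 ^ n * ((Fintype.card I : ℝ) / 2 ^ (2 * i)) := by
          rw [Finset.sum_const, Finset.card_univ, nsmul_eq_mul]
          norm_num
  -- Markov: bad set is small
  set Bad : Finset I := E.filter (fun j => 4 * 2 ^ (n - i) < (Bf j).card) with hBadDef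
  have hBadsub : Bad ⊆ E := Finset.filter_subset _ _
  have hBadcard : (Bad.card : ℝ) ≤ ((Fintype.card I : ℝ) / 2 ^ i) / 4 := by
    have h1 : (Bad.card : ℝ) * (4 * 2 ^ (n - i)) ≤ ∑ j ∈ E, ((Bf j).card : ℝ) := by
      calc (Bad.card : ℝ) * (4 * 2 ^ (n - i)) = ∑ _j ∈ Bad, (4 * (2:ℝ) ^ (n - i)) := by
            rw [Finset.sum_const, nsmul_eq_mul]
        _ ≤ ∑ j ∈ Bad, ((Bf j).card : ℝ) := by
            refine Finset.sum_le_sum fun j hj => ?_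
            have := (Finset.mem_filter.mp hj).2
            have h4 : (4 * 2 ^ (n - i) : ℕ) ≤ (Bf j).card := le_of_lt this
            exact_mod_cast h4
        _ ≤ ∑ j ∈ E, ((Bf j).card : ℝ) := by
            refine Finset.sum_le_sum_of_subset_of_nonneg hBadsub fun j _ _ => by positivity
    have key := le_trans h1 hBsum
    have hrw : (2:ℝ) ^ n * ((Fintype.card I : ℝ) / 2 ^ (2 * i))
        = (((Fintype.card I : ℝ) / 2 ^ i) / 4) * (4 * 2 ^ (n - i)) := by
      rw [show (2:ℝ) ^ (2 * i) = 2 ^ i * 2 ^ i from by rw [two_mul, pow_add], ← hpow]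
      field_simp
    rw [hrw] at key
    exact le_of_mul_le_mul_right key (by positivity)
  -- good set is big
  have hGoodcard : (3/4) * ((Fintype.card I : ℝ) / 2 ^ i) ≤ ((E \ Bad).card : ℝ) := by
    rw [Finset.card_sdiff_of_subset hBadsub, Nat.cast_sub (Finset.card_le_card hBadsub)]
    rw [hE] at *
    linarith [hBadcard, hE]
  -- per good j, S j is small
  have hSgood : ∀ j ∈ E \ Bad, 1 / (5 * (2:ℝ) ^ (n - i)) ≤ 1 / (((Sfun j).card : ℝ)) := by
    intro j hj
    have hjE : j ∈ E := (Finset.mem_sdiff.mp hj).1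
    have hjcond : ∀ t : Fin i, g j (f xs) (Fin.castLE hin t) = w t :=
      (Finset.mem_filter.mp hjE).2
    have hjB : (Bf j).card ≤ 4 * 2 ^ (n - i) := by
      have h2 := (Finset.mem_sdiff.mp hj).2
      rw [hBadDef, Finset.mem_filter] at h2
      push_neg at h2
      exact h2 hjE
    have hxsS : xs ∈ Sfun j := by
      simp only [Sfun, Finset.mem_filter, Finset.mem_univ, true_and]
      exact hjcond
    have hposS : 0 < (Sfun j).card := Finset.card_pos.mpr ⟨xs, hxsS⟩
    have hsub : Sfun j ⊆ (univ.filter (fun x => f x = f xs)) ∪ Bf j := by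
      intro x hx
      simp only [Sfun, Bf, Finset.mem_union, Finset.mem_filter, Finset.mem_univ,
        true_and] at hx ⊢
      by_cases h : f x = f xs
      · left; exact h
      · right; exact ⟨hx, h⟩
    have hcardS : (Sfun j).card ≤ 5 * 2 ^ (n - i) := by
      calc (Sfun j).card ≤ ((univ.filter (fun x => f x = f xs)) ∪ Bf j).card :=
            Finset.card_le_card hsub
        _ ≤ (univ.filter (fun x => f x = f xs)).card + (Bf j).card :=
            Finset.card_union_le _ _
        _ ≤ 2 ^ (n - i) + 4 * 2 ^ (n - i) := Nat.add_le_add hxs hjB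
        _ = 5 * 2 ^ (n - i) := by ring
    apply one_div_le_one_div_of_le
    · exact_mod_cast hposS
    · exact_mod_cast hcardS
  -- putting it together
  have hchain : (3/4) * ((Fintype.card I : ℝ) / 2 ^ i) * (1 / (5 * 2 ^ (n - i)))
      ≤ ∑ j ∈ E, 1 / (((Sfun j).card : ℝ)) := by
    calc (3/4) * ((Fintype.card I : ℝ) / 2 ^ i) * (1 / (5 * 2 ^ (n - i)))
        ≤ ((E \ Bad).card : ℝ) * (1 / (5 * 2 ^ (n - i))) := by
          apply mul_le_mul_of_nonneg_right hGoodcard (by positivity)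
      _ = ∑ _j ∈ E \ Bad, (1 / (5 * (2:ℝ) ^ (n - i))) := by
          rw [Finset.sum_const, nsmul_eq_mul]
      _ ≤ ∑ j ∈ E \ Bad, 1 / (((Sfun j).card : ℝ)) := Finset.sum_le_sum hSgood
      _ ≤ ∑ j ∈ E, 1 / (((Sfun j).card : ℝ)) := by
          refine Finset.sum_le_sum_of_subset_of_nonneg (Finset.sdiff_subset) fun j _ _ => by
            positivity
  rw [hsum]
  have hrpow : (2 : ℝ) ^ (-(n : ℝ)) = 1 / 2 ^ n := by
    rw [Real.rpow_neg (by norm_num), Real.rpow_natCast, one_div]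
  have hval : (1 / (Fintype.card I : ℝ)) *
      ((3/4) * ((Fintype.card I : ℝ) / 2 ^ i) * (1 / (5 * 2 ^ (n - i))))
      = 3 / (20 * 2 ^ n) := by
    rw [← hpow]; field_simp; ring
  have hstep : (1 / (Fintype.card I : ℝ)) *
      ((3/4) * ((Fintype.card I : ℝ) / 2 ^ i) * (1 / (5 * 2 ^ (n - i))))
      ≤ (1 / (Fintype.card I : ℝ)) * ∑ j ∈ E, 1 / (((Sfun j).card : ℝ)) := by
    apply mul_le_mul_of_nonneg_left hchain (by positivity)
  refine le_trans ?_ hstep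
  rw [hval, hrpow]
  rw [div_le_div_iff₀ (by positivity) (by positivity)]
  have h2n : ((1:ℝ) / 2 ^ n) * (20 * 2 ^ n) = 20 := by field_simp
  linarith [h2n]
end

section
/- Let F : D → R be a function on a finite domain, Z uniform on D, and L(z) ⊆ F^{-1}(F(z)) nonempty sets with z ∈ L(z). Let Z' be a uniform element of F^{-1}(F(Z)). If Pr[Z' ∉ L(Z)] ≥ δ, then E[log₂|F^{-1}(F(Z))|] − E[log₂|L(Z)|] ≥ δ/2. -/
open Finset
open scoped Classical

/-!
With `a = |L(z)| ≤ b = |F⁻¹(F(z))|`, the inequality `1 - x⁻¹ ≤ log x` at `x = b / a` gives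
`|F⁻¹(F(z)) \ L(z)| / |F⁻¹(F(z))| = 1 - a / b ≤ log₂ b - log₂ a` pointwise; averaging over `z`
bounds the log-size gap below by `Pr[Z' ∉ L(Z)] ≥ δ`, hence by `δ / 2`.
-/

namespace Real

lemma log_le_logb_two {x : ℝ} (hx : 1 ≤ x) : log x ≤ logb 2 x := by
  rw [← log_div_log, le_div_iff₀ (log_pos one_lt_two)]
  exact mul_le_of_le_one_right (log_nonneg hx) (by linarith [log_two_lt_d9])

lemma sub_div_le_logb_two_sub_logb_two {a b : ℝ} (ha : 0 < a) (hab : a ≤ b) :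
    (b - a) / b ≤ logb 2 b - logb 2 a := by
  have hb : 0 < b := ha.trans_le hab
  calc (b - a) / b = 1 - (b / a)⁻¹ := by field_simp
    _ ≤ log (b / a) := one_sub_inv_le_log_of_pos (div_pos hb ha)
    _ ≤ logb 2 (b / a) := log_le_logb_two ((one_le_div ha).2 hab)
    _ = logb 2 b - logb 2 a := logb_div hb.ne' ha.ne'

end Real

lemma Finset.card_sdiff_div_card_le_logb_two_sub {α : Type*} {s t : Finset α}
    (hs : s.Nonempty) (hst : s ⊆ t) :
    (#(t \ s) : ℝ) / #t ≤ Real.logb 2 #t - Real.logb 2 #s := by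
  rw [cast_card_sdiff hst]
  exact Real.sub_div_le_logb_two_sub_logb_two (by exact_mod_cast hs.card_pos)
    (by exact_mod_cast card_le_card hst)

theorem stmt18_general {D R : Type*} [Fintype D] (F : D → R)
    (L : D → Finset D) (hmem : ∀ z, z ∈ L z)
    (hsub : ∀ z, L z ⊆ univ.filter (fun z' => F z' = F z))
    (δ : ℝ)
    (hδ : δ ≤ (1 / (Fintype.card D : ℝ)) * ∑ z,
      (((univ.filter (fun z' => F z' = F z)) \ L z).card : ℝ) /
        ((univ.filter (fun z' => F z' = F z)).card : ℝ)) :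
    δ / 2 ≤ (1 / (Fintype.card D : ℝ)) * ∑ z,
      (Real.logb 2 ((univ.filter (fun z' => F z' = F z)).card) -
        Real.logb 2 ((L z).card)) := by
  refine le_trans ?_ (mul_le_mul_of_nonneg_left (sum_le_sum fun z _ =>
    card_sdiff_div_card_le_logb_two_sub ⟨z, hmem z⟩ (hsub z)) (by positivity))
  exact (div_le_div_of_nonneg_right hδ zero_le_two).trans (half_le_self (by positivity))

/-- If a uniformly random sibling Z' of Z (i.e. uniform in F⁻¹(F(Z))) escapes L(Z) with
probability at least δ, then the expected log-size of L is smaller than the expected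
log-size of the fibers by at least δ/2. -/
theorem stmt18 {D R : Type*} [Fintype D] [Nonempty D] (F : D → R)
    (L : D → Finset D) (hmem : ∀ z, z ∈ L z)
    (hsub : ∀ z, L z ⊆ univ.filter (fun z' => F z' = F z))
    (δ : ℝ)
    (hδ : δ ≤ (1 / (Fintype.card D : ℝ)) * ∑ z,
      (((univ.filter (fun z' => F z' = F z)) \ L z).card : ℝ) /
        ((univ.filter (fun z' => F z' = F z)).card : ℝ)) :
    δ / 2 ≤ (1 / (Fintype.card D : ℝ)) * ∑ z,
      (Real.logb 2 ((univ.filter (fun z' => F z' = F z)).card) -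
        Real.logb 2 ((L z).card)) :=
  stmt18_general F L hmem hsub δ hδ
end
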